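/- (Higher-order Lagrange–Poincaré equations for a trivial principal bundle characterize critical points.) Let n, k ≥ 1, t₀ < t₁, let 𝔤 be a finite-dimensional real Lie algebra, and let L : (Fin (k+1) → ℝ^n) × (Fin k → 𝔤) → ℝ be smooth; write ∂^m_rL (0 ≤ r ≤ k) for the partial Fréchet derivatives in the ℝ^n slots and ∂^ξ_rL (1 ≤ r ≤ k) for those in the 𝔤 slots. Let m : ℝ → ℝ^n and ξ : ℝ → 𝔤 be smooth, and set X(t) := (jet_k m(t), Jξ(t)). Then the following are equivalent: (a) for every smooth h : ℝ → ℝ^n and σ : ℝ → 𝔤 whose derivatives of orders 0,…,k−1 all vanish at t₀ and t₁, ∫_{t₀}^{t₁} [ ∑_{r=0}^{k} ∂^m_rL(X(t))(h^{(r)}(t)) + ∑_{r=1}^{k} ∂^ξ_rL(X(t))((σ' + [ξ,σ])^{(r−1)}(t)) ] dt = 0; (b) for all t ∈ [t₀,t₁]: ∑_{r=0}^{k} (−1)^r D^r[t ↦ ∂^m_rL(X(t))](t) = 0 in (ℝ^n →ₗ[ℝ] ℝ), and π'(t)(η) = π(t)([ξ(t), η]) for all η ∈ 𝔤, where π(t)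 := ∑_{r=1}^{k} (−1)^{r−1} D^{r−1}[t ↦ ∂^ξ_rL(X(t))](t) ∈ 𝔤*. -/

import Mathlib

/-!
Both the Euler–Lagrange expression and `π` are Euler operators `∑ᵣ (-1)ʳ Dʳ Aᵣ`. Integrating by
parts `r` times against `h⁽ʳ⁾` turns the horizontal part of the first variation into
`∫ EL(h)`, and the vertical part into `∫ π(σ' + [ξ, σ])`; the boundary terms vanish because,
by the Leibniz rule, `σ' + [ξ, σ]` inherits from `σ` the vanishing of its derivatives of order
`< k - 1` at the endpoints. One more integration by parts gives `∫ (π ∘ ad ξ - π')(σ)`. As `h`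
and `σ` vary independently, the fundamental lemma of the calculus of variations, tested against
functions compactly supported in `(t₀, t₁)`, shows that the first variation vanishes for all
admissible `(h, σ)` exactly when both integrands vanish on `[t₀, t₁]`.
-/

noncomputable section

/-- The `k`-jet of a curve: slot `r` holds the `r`-th derivative. -/
def jet {E : Type*} [NormedAddCommGroup E] [NormedSpace ℝ E] (k : ℕ) (q : ℝ → E) (t : ℝ) :
    Fin (k + 1) → E := fun r => iteratedDeriv r q t

/-- The reduced `k`-jet of a curve: slot `i` (Lean indexing `0,…,k-1`, i.e. the paper's
slot `r = i+1`) holds the `i`-th derivative. -/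
def rjet {E : Type*} [NormedAddCommGroup E] [NormedSpace ℝ E] (k : ℕ) (q : ℝ → E) (t : ℝ) :
    Fin k → E := fun i => iteratedDeriv i q t

/-- Partial Fréchet derivative in the `r`-th slot of the first (base) factor of a map
defined on `(Fin (k+1) → E) × (Fin k → G)` (zero junk value for `r ≥ k+1`). -/
def pdBase {k : ℕ} {E G : Type*} [NormedAddCommGroup E] [NormedSpace ℝ E]
    [NormedAddCommGroup G] [NormedSpace ℝ G]
    (L : (Fin (k + 1) → E) × (Fin k → G) → ℝ) (r : ℕ)
    (X : (Fin (k + 1) → E) × (Fin k → G)) : E →L[ℝ] ℝ :=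
  if h : r < k + 1 then
    (fderiv ℝ L X).comp
      ((ContinuousLinearMap.inl ℝ (Fin (k + 1) → E) (Fin k → G)).comp
        (ContinuousLinearMap.pi
          (Pi.single (⟨r, h⟩ : Fin (k + 1)) (ContinuousLinearMap.id ℝ E))))
  else 0

/-- Partial Fréchet derivative in the `i`-th slot of the second (Lie algebra) factor of a
map defined on `(Fin (k+1) → E) × (Fin k → G)` (zero junk value for `i ≥ k`); Lean index
`i` corresponds to the paper's slot `r = i+1`. -/
def pdFib {k : ℕ} {E G : Type*} [NormedAddCommGroup E] [NormedSpace ℝ E]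
    [NormedAddCommGroup G] [NormedSpace ℝ G]
    (L : (Fin (k + 1) → E) × (Fin k → G) → ℝ) (i : ℕ)
    (X : (Fin (k + 1) → E) × (Fin k → G)) : G →L[ℝ] ℝ :=
  if h : i < k then
    (fderiv ℝ L X).comp
      ((ContinuousLinearMap.inr ℝ (Fin (k + 1) → E) (Fin k → G)).comp
        (ContinuousLinearMap.pi
          (Pi.single (⟨i, h⟩ : Fin k) (ContinuousLinearMap.id ℝ G))))
  else 0

open scoped ContDiff
open MeasureTheory Set Finset

section Calculus

variable {E F G : Type*} [NormedAddCommGroup E] [NormedSpace ℝ E]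
  [NormedAddCommGroup F] [NormedSpace ℝ F] [NormedAddCommGroup G] [NormedSpace ℝ G]

theorem contDiff_iteratedDeriv {f : ℝ → E} (hf : ContDiff ℝ ∞ f) (n : ℕ) :
    ContDiff ℝ ∞ (iteratedDeriv n f) := by
  rw [iteratedDeriv_eq_iterate]
  exact hf.iterate_deriv n

theorem iteratedDeriv_eq_zero_of_notMem_tsupport {f : ℝ → E} {x : ℝ} (hx : x ∉ tsupport f)
    (n : ℕ) : iteratedDeriv n f x = 0 := by
  rw [(notMem_tsupport_iff_eventuallyEq.mp hx).iteratedDeriv_eq n, Pi.zero_def,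
    iteratedDeriv_const, ite_self]

theorem iteratedDeriv_eq_zero_of_tsupport_subset_Ioo {f : ℝ → E} {a b : ℝ}
    (hf : tsupport f ⊆ Ioo a b) (n : ℕ) : iteratedDeriv n f a = 0 ∧ iteratedDeriv n f b = 0 :=
  ⟨iteratedDeriv_eq_zero_of_notMem_tsupport (fun ha => (hf ha).1.false) n,
    iteratedDeriv_eq_zero_of_notMem_tsupport (fun hb => (hf hb).2.false) n⟩

theorem iteratedDeriv_bilinear_eq_zero (β : E →L[ℝ] F →L[ℝ] G) {f : ℝ → E} {g : ℝ → F}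
    (hf : ContDiff ℝ ∞ f) (hg : ContDiff ℝ ∞ g) {c : ℝ} {j : ℕ}
    (hgc : ∀ l ≤ j, iteratedDeriv l g c = 0) :
    iteratedDeriv j (fun t => β (f t) (g t)) c = 0 := by
  induction j generalizing f g with
  | zero =>
    have hg0 := hgc 0 le_rfl
    rw [iteratedDeriv_zero] at hg0 ⊢
    rw [hg0, map_zero]
  | succ j ih =>
    have hderiv : deriv (fun t => β (f t) (g t))
        = fun t => β (f t) (deriv g t) + β (deriv f t) (g t) := by
      funext t
      exact β.deriv_of_bilinear (fun _ => hf.differentiable (by simp) t)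
        (fun _ => hg.differentiable (by simp) t)
    have hf' := (contDiff_infty_iff_deriv.mp hf).2
    have hg' := (contDiff_infty_iff_deriv.mp hg).2
    have h₁ : ContDiff ℝ ∞ (fun t => β (f t) (deriv g t)) := (β.contDiff.comp hf).clm_apply hg'
    have h₂ : ContDiff ℝ ∞ (fun t => β (deriv f t) (g t)) := (β.contDiff.comp hf').clm_apply hg
    rw [iteratedDeriv_succ', hderiv,
      iteratedDeriv_fun_add (h₁.contDiffAt.of_le (by exact_mod_cast le_top))
        (h₂.contDiffAt.of_le (by exact_mod_cast le_top)),
      ih hf hg' fun l hl => by rw [← iteratedDeriv_succ']; exact hgc (l + 1) (by omega),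
      ih hf' hg fun l hl => hgc l (by omega), add_zero]

end Calculus

section IntegrationByParts

variable {E : Type*} [NormedAddCommGroup E] [NormedSpace ℝ E] {a b : ℝ}

theorem integral_apply_deriv_eq_neg {f : ℝ → E →L[ℝ] ℝ} {u : ℝ → E} (hf : ContDiff ℝ 1 f)
    (hu : ContDiff ℝ 1 u) (ha : u a = 0) (hb : u b = 0) :
    ∫ t in a..b, f t (deriv u t) = -∫ t in a..b, deriv f t (u t) := by
  have hf'u := ((hf.continuous_deriv le_rfl).clm_apply hu.continuous).intervalIntegrable
    (μ := volume) a b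
  have hfu' := (hf.continuous.clm_apply (hu.continuous_deriv le_rfl)).intervalIntegrable
    (μ := volume) a b
  have hfu : ∫ t in a..b, (deriv f t (u t) + f t (deriv u t)) = f b (u b) - f a (u a) :=
    intervalIntegral.integral_eq_sub_of_hasDerivAt
      (fun t _ => (hf.differentiable one_ne_zero t).hasDerivAt.clm_apply
        (hu.differentiable one_ne_zero t).hasDerivAt) (hf'u.add hfu')
  rw [intervalIntegral.integral_add hf'u hfu', ha, hb, map_zero, map_zero, sub_zero] at hfu
  linear_combination hfu

theorem integral_apply_iteratedDeriv {f : ℝ → E →L[ℝ] ℝ} {u : ℝ → E} (hf : ContDiff ℝ ∞ f)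
    (hu : ContDiff ℝ ∞ u) {r : ℕ}
    (hvan : ∀ j < r, iteratedDeriv j u a = 0 ∧ iteratedDeriv j u b = 0) :
    ∫ t in a..b, f t (iteratedDeriv r u t)
      = ∫ t in a..b, ((-1 : ℝ) ^ r • iteratedDeriv r f t) (u t) := by
  induction r generalizing f with
  | zero => simp
  | succ r ih =>
    have hf' := (contDiff_infty_iff_deriv.mp hf).2
    calc ∫ t in a..b, f t (iteratedDeriv (r + 1) u t)
        = -∫ t in a..b, deriv f t (iteratedDeriv r u t) := by
          rw [iteratedDeriv_succ]
          exact integral_apply_deriv_eq_neg (hf.of_le (by simp))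
            ((contDiff_iteratedDeriv hu r).of_le (by simp)) (hvan r r.lt_succ_self).1
            (hvan r r.lt_succ_self).2
      _ = -∫ t in a..b, ((-1 : ℝ) ^ r • iteratedDeriv r (deriv f) t) (u t) := by
          rw [ih hf' fun j hj => hvan j (hj.trans r.lt_succ_self)]
      _ = ∫ t in a..b, ((-1 : ℝ) ^ (r + 1) • iteratedDeriv (r + 1) f t) (u t) := by
          simp [iteratedDeriv_succ', pow_succ, intervalIntegral.integral_neg]

end IntegrationByParts

section EulerOperator

variable {E : Type*} [NormedAddCommGroup E] [NormedSpace ℝ E] {a b : ℝ}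

def eulerOperator (A : ℕ → ℝ → E →L[ℝ] ℝ) (N : ℕ) (t : ℝ) : E →L[ℝ] ℝ :=
  ∑ r ∈ range N, (-1 : ℝ) ^ r • iteratedDeriv r (A r) t

theorem contDiff_eulerOperator {A : ℕ → ℝ → E →L[ℝ] ℝ} (hA : ∀ r, ContDiff ℝ ∞ (A r)) (N : ℕ) :
    ContDiff ℝ ∞ (eulerOperator A N) :=
  ContDiff.sum fun r _ => (contDiff_iteratedDeriv (hA r) r).const_smul _

theorem integral_sum_apply_iteratedDeriv {A : ℕ → ℝ → E →L[ℝ] ℝ} (hA : ∀ r, ContDiff ℝ ∞ (A r))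
    {u : ℝ → E} (hu : ContDiff ℝ ∞ u) {N : ℕ}
    (hvan : ∀ j, j + 1 < N → iteratedDeriv j u a = 0 ∧ iteratedDeriv j u b = 0) :
    ∫ t in a..b, ∑ r ∈ range N, A r t (iteratedDeriv r u t)
      = ∫ t in a..b, eulerOperator A N t (u t) := by
  have hint : ∀ r, IntervalIntegrable
      (fun t => ((-1 : ℝ) ^ r • iteratedDeriv r (A r) t) (u t)) volume a b := fun r => by
    have := (contDiff_iteratedDeriv (hA r) r).continuous
    exact (by fun_prop : Continuous _).intervalIntegrable a b
  simp only [eulerOperator, _root_.sum_apply]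
  rw [intervalIntegral.integral_finsetSum fun r _ => ((hA r).continuous.clm_apply
      (contDiff_iteratedDeriv hu r).continuous).intervalIntegrable a b,
    intervalIntegral.integral_finsetSum fun r _ => hint r]
  refine Finset.sum_congr rfl fun r hr => integral_apply_iteratedDeriv (hA r) hu fun j hj => ?_
  exact hvan j (by simp at hr; omega)

end EulerOperator

section EulerPoincare

variable {E G : Type*} [NormedAddCommGroup E] [NormedSpace ℝ E]
  [NormedAddCommGroup G] [NormedSpace ℝ G] {a b : ℝ}

theorem integral_apply_deriv_add_bracket {π : ℝ → G →L[ℝ] ℝ} (hπ : ContDiff ℝ 1 π)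
    (β : G →L[ℝ] G →L[ℝ] G) {ξ σ : ℝ → G} (hξ : Continuous ξ) (hσ : ContDiff ℝ 1 σ)
    (ha : σ a = 0) (hb : σ b = 0) :
    ∫ t in a..b, π t (deriv σ t + β (ξ t) (σ t))
      = ∫ t in a..b, ((π t).comp (β (ξ t)) - deriv π t) (σ t) := by
  have hπσ' := (hπ.continuous.clm_apply (hσ.continuous_deriv le_rfl)).intervalIntegrable
    (μ := volume) a b
  have hπβ : Continuous fun t => π t (β (ξ t) (σ t)) := by
    have := hπ.continuous; have := hσ.continuous; fun_prop
  have hπ'σ := ((hπ.continuous_deriv le_rfl).clm_apply hσ.continuous).intervalIntegrable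
    (μ := volume) a b
  simp only [map_add, sub_apply, ContinuousLinearMap.comp_apply]
  rw [intervalIntegral.integral_add hπσ' (hπβ.intervalIntegrable a b),
    intervalIntegral.integral_sub (hπβ.intervalIntegrable a b) hπ'σ,
    integral_apply_deriv_eq_neg hπ hσ ha hb]
  ring

theorem iteratedDeriv_deriv_add_bracket_eq_zero (β : G →L[ℝ] G →L[ℝ] G) {ξ σ : ℝ → G}
    (hξ : ContDiff ℝ ∞ ξ) (hσ : ContDiff ℝ ∞ σ) {k j : ℕ} (hj : j + 1 < k) {c : ℝ}
    (hσc : ∀ l < k, iteratedDeriv l σ c = 0) :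
    iteratedDeriv j (fun t => deriv σ t + β (ξ t) (σ t)) c = 0 := by
  have hσ' := (contDiff_infty_iff_deriv.mp hσ).2
  have hβ : ContDiff ℝ ∞ fun t => β (ξ t) (σ t) := (β.contDiff.comp hξ).clm_apply hσ
  rw [iteratedDeriv_fun_add (hσ'.contDiffAt.of_le (by exact_mod_cast le_top))
      (hβ.contDiffAt.of_le (by exact_mod_cast le_top)), ← iteratedDeriv_succ', hσc _ hj,
    iteratedDeriv_bilinear_eq_zero β hξ hσ fun l hl => hσc l (by omega), add_zero]

end EulerPoincare

section FundamentalLemma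

variable {E F : Type*} [NormedAddCommGroup E] [NormedSpace ℝ E]
  [NormedAddCommGroup F] [NormedSpace ℝ F] [CompleteSpace F] {a b : ℝ}

theorem eqOn_zero_of_integral_smul_eq_zero (hab : a < b) {f : ℝ → F} (hf : Continuous f)
    (H : ∀ φ : ℝ → ℝ, ContDiff ℝ ∞ φ → tsupport φ ⊆ Ioo a b → ∫ t in a..b, φ t • f t = 0) :
    EqOn f 0 (Icc a b) := by
  have hae : ∀ᵐ t, t ∈ Ioo a b → f t = 0 :=
    isOpen_Ioo.ae_eq_zero_of_integral_contDiff_smul_eq_zero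
      (hf.locallyIntegrable.locallyIntegrableOn _)
      fun φ hφ _ hsupp => by
        rw [← H φ hφ hsupp, intervalIntegral.integral_of_le hab.le,
          setIntegral_eq_integral_of_forall_compl_eq_zero fun t ht => ?_]
        rw [image_eq_zero_of_notMem_tsupport fun h => ht (Ioo_subset_Ioc_self (hsupp h)),
          zero_smul]
  refine Measure.eqOn_Icc_of_ae_eq volume hab.ne ?_ hf.continuousOn continuousOn_const
  rw [← Measure.restrict_congr_set Ioo_ae_eq_Icc]
  exact (ae_restrict_iff' measurableSet_Ioo).mpr hae

theorem eqOn_zero_of_integral_apply_eq_zero (hab : a < b) {f : ℝ → E →L[ℝ] ℝ} (hf : Continuous f)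
    (H : ∀ h : ℝ → E, ContDiff ℝ ∞ h → tsupport h ⊆ Ioo a b → ∫ t in a..b, f t (h t) = 0) :
    EqOn f 0 (Icc a b) := by
  intro t ht
  ext v
  refine eqOn_zero_of_integral_smul_eq_zero hab (hf.clm_apply continuous_const)
    (fun φ hφ hsupp => ?_) ht
  simpa using H (fun s => φ s • v) (hφ.smul contDiff_const)
    ((tsupport_smul_subset_left _ _).trans hsupp)

end FundamentalLemma

section FirstVariation

variable {E G : Type*} [NormedAddCommGroup E] [NormedSpace ℝ E]
  [NormedAddCommGroup G] [NormedSpace ℝ G] {a b : ℝ} {k : ℕ}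
  {A : ℕ → ℝ → E →L[ℝ] ℝ} {B : ℕ → ℝ → G →L[ℝ] ℝ} (β : G →L[ℝ] G →L[ℝ] G) {ξ : ℝ → G}

theorem integral_firstVariation_eq (hk : 1 ≤ k) (hA : ∀ r, ContDiff ℝ ∞ (A r))
    (hB : ∀ i, ContDiff ℝ ∞ (B i)) (hξ : ContDiff ℝ ∞ ξ) {h : ℝ → E} {σ : ℝ → G}
    (hh : ContDiff ℝ ∞ h) (hσ : ContDiff ℝ ∞ σ)
    (hvh : ∀ j < k, iteratedDeriv j h a = 0 ∧ iteratedDeriv j h b = 0)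
    (hvσ : ∀ j < k, iteratedDeriv j σ a = 0 ∧ iteratedDeriv j σ b = 0) :
    ∫ t in a..b, ((∑ r ∈ range (k + 1), A r t (iteratedDeriv r h t)) +
        ∑ i ∈ range k, B i t (iteratedDeriv i (fun u => deriv σ u + β (ξ u) (σ u)) t))
      = ∫ t in a..b, (eulerOperator A (k + 1) t (h t) +
          ((eulerOperator B k t).comp (β (ξ t)) - deriv (eulerOperator B k) t) (σ t)) := by
  set w := fun u => deriv σ u + β (ξ u) (σ u)
  have hw : ContDiff ℝ ∞ w :=
    (contDiff_infty_iff_deriv.mp hσ).2.add ((β.contDiff.comp hξ).clm_apply hσ)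
  have hπ := contDiff_eulerOperator hB k
  have hEL := contDiff_eulerOperator hA (k + 1)
  rw [intervalIntegral.integral_add, intervalIntegral.integral_add,
    integral_sum_apply_iteratedDeriv hA hh fun j hj => hvh j (by omega),
    integral_sum_apply_iteratedDeriv hB hw fun j hj => ⟨
      iteratedDeriv_deriv_add_bracket_eq_zero β hξ hσ hj fun l hl => (hvσ l hl).1,
      iteratedDeriv_deriv_add_bracket_eq_zero β hξ hσ hj fun l hl => (hvσ l hl).2⟩,
    integral_apply_deriv_add_bracket (hπ.of_le (by simp)) β hξ.continuous (hσ.of_le (by simp))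
      (by simpa using (hvσ 0 hk).1) (by simpa using (hvσ 0 hk).2)]
  all_goals refine Continuous.intervalIntegrable ?_ a b
  · exact hEL.continuous.clm_apply hh.continuous
  · exact ((hπ.continuous.clm_comp (β.continuous.comp hξ.continuous)).sub
      (hπ.continuous_deriv (by simp))).clm_apply hσ.continuous
  · exact continuous_finsetSum _ fun r _ =>
      (hA r).continuous.clm_apply (contDiff_iteratedDeriv hh r).continuous
  · exact continuous_finsetSum _ fun i _ =>
      (hB i).continuous.clm_apply (contDiff_iteratedDeriv hw i).continuous

theorem firstVariation_eq_zero_iff (hk : 1 ≤ k) (hab : a < b) (hA : ∀ r, ContDiff ℝ ∞ (A r))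
    (hB : ∀ i, ContDiff ℝ ∞ (B i)) (hξ : ContDiff ℝ ∞ ξ) :
    (∀ (h : ℝ → E) (σ : ℝ → G), ContDiff ℝ ∞ h → ContDiff ℝ ∞ σ →
        (∀ j < k, iteratedDeriv j h a = 0 ∧ iteratedDeriv j h b = 0) →
        (∀ j < k, iteratedDeriv j σ a = 0 ∧ iteratedDeriv j σ b = 0) →
        ∫ t in a..b, ((∑ r ∈ range (k + 1), A r t (iteratedDeriv r h t)) +
          ∑ i ∈ range k, B i t (iteratedDeriv i (fun u => deriv σ u + β (ξ u) (σ u)) t)) = 0) ↔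
      ∀ t ∈ Icc a b, eulerOperator A (k + 1) t = 0 ∧
        ∀ η : G, deriv (eulerOperator B k) t η = eulerOperator B k t (β (ξ t) η) := by
  have hπ := contDiff_eulerOperator hB k
  constructor
  · intro H
    have H' : ∀ (h : ℝ → E) (σ : ℝ → G), ContDiff ℝ ∞ h → ContDiff ℝ ∞ σ →
        tsupport h ⊆ Ioo a b → tsupport σ ⊆ Ioo a b →
        ∫ t in a..b, (eulerOperator A (k + 1) t (h t) +
          ((eulerOperator B k t).comp (β (ξ t)) - deriv (eulerOperator B k) t) (σ t)) = 0 := by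
      intro h σ hh hσ hsh hsσ
      have hvh := fun j (_ : j < k) => iteratedDeriv_eq_zero_of_tsupport_subset_Ioo hsh j
      have hvσ := fun j (_ : j < k) => iteratedDeriv_eq_zero_of_tsupport_subset_Ioo hsσ j
      rw [← integral_firstVariation_eq β hk hA hB hξ hh hσ hvh hvσ]
      exact H h σ hh hσ hvh hvσ
    have hEL : EqOn (eulerOperator A (k + 1)) 0 (Icc a b) :=
      eqOn_zero_of_integral_apply_eq_zero hab (contDiff_eulerOperator hA _).continuous
        fun h hh hsupp => by simpa using H' h 0 hh contDiff_const hsupp (by simp)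
    have hEP : EqOn (fun t => (eulerOperator B k t).comp (β (ξ t)) - deriv (eulerOperator B k) t)
        0 (Icc a b) :=
      eqOn_zero_of_integral_apply_eq_zero hab
        ((hπ.continuous.clm_comp (β.continuous.comp hξ.continuous)).sub
          (hπ.continuous_deriv (by simp)))
        fun σ hσ hsupp => by simpa using H' 0 σ contDiff_const hσ (by simp) hsupp
    intro t ht
    refine ⟨hEL ht, fun η => ?_⟩
    have hη : (eulerOperator B k t) (β (ξ t) η) - deriv (eulerOperator B k) t η = 0 := by
      simpa using DFunLike.congr_fun (hEP ht) η
    exact (sub_eq_zero.mp hη).symm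
  · intro H h σ hh hσ hvh hvσ
    rw [integral_firstVariation_eq β hk hA hB hξ hh hσ hvh hvσ]
    refine (intervalIntegral.integral_congr fun t ht => ?_).trans intervalIntegral.integral_zero
    rw [uIcc_of_le hab.le] at ht
    obtain ⟨hEL, hEP⟩ := H t ht
    simp [hEL, hEP (σ t)]

end FirstVariation

section PartialDerivatives

variable {k : ℕ} {E G : Type*} [NormedAddCommGroup E] [NormedSpace ℝ E]
  [NormedAddCommGroup G] [NormedSpace ℝ G] {L : (Fin (k + 1) → E) × (Fin k → G) → ℝ}
  {Y : ℝ → (Fin (k + 1) → E) × (Fin k → G)}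

theorem contDiff_pdBase_comp (hL : ContDiff ℝ ∞ L) (hY : ContDiff ℝ ∞ Y) (r : ℕ) :
    ContDiff ℝ ∞ fun t => pdBase L r (Y t) := by
  unfold pdBase
  split_ifs
  · exact ((hL.fderiv_right (by exact_mod_cast le_top)).comp hY).clm_comp contDiff_const
  · exact contDiff_const

theorem contDiff_pdFib_comp (hL : ContDiff ℝ ∞ L) (hY : ContDiff ℝ ∞ Y) (i : ℕ) :
    ContDiff ℝ ∞ fun t => pdFib L i (Y t) := by
  unfold pdFib
  split_ifs
  · exact ((hL.fderiv_right (by exact_mod_cast le_top)).comp hY).clm_comp contDiff_const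
  · exact contDiff_const

end PartialDerivatives

theorem lagrange_poincare_iff_critical_general {𝔤 : Type*} [NormedAddCommGroup 𝔤] [NormedSpace ℝ 𝔤]
    [FiniteDimensional ℝ 𝔤]
    (bra : 𝔤 →ₗ[ℝ] 𝔤 →ₗ[ℝ] 𝔤)
    (n k : ℕ) (hk : 1 ≤ k) (t₀ t₁ : ℝ) (ht : t₀ < t₁)
    (L : (Fin (k + 1) → EuclideanSpace ℝ (Fin n)) × (Fin k → 𝔤) → ℝ)
    (hL : ContDiff ℝ (⊤ : ℕ∞) L)
    (m : ℝ → EuclideanSpace ℝ (Fin n)) (hm : ContDiff ℝ (⊤ : ℕ∞) m)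
    (ξ : ℝ → 𝔤) (hξ : ContDiff ℝ (⊤ : ℕ∞) ξ)
    (X : ℝ → (Fin (k + 1) → EuclideanSpace ℝ (Fin n)) × (Fin k → 𝔤))
    (hX : X = fun t => (jet k m t, rjet k ξ t))
    (π : ℝ → 𝔤 →L[ℝ] ℝ)
    (hπ : π = fun t => ∑ i ∈ Finset.range k,
        (-1 : ℝ) ^ i • iteratedDeriv i (fun u => pdFib L i (X u)) t) :
    (∀ (h : ℝ → EuclideanSpace ℝ (Fin n)) (σ : ℝ → 𝔤),
        ContDiff ℝ (⊤ : ℕ∞) h → ContDiff ℝ (⊤ : ℕ∞) σ →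
        (∀ j < k, iteratedDeriv j h t₀ = 0 ∧ iteratedDeriv j h t₁ = 0) →
        (∀ j < k, iteratedDeriv j σ t₀ = 0 ∧ iteratedDeriv j σ t₁ = 0) →
        (∫ t in t₀..t₁,
          ((∑ r ∈ Finset.range (k + 1), pdBase L r (X t) (iteratedDeriv r h t)) +
            ∑ i ∈ Finset.range k,
              pdFib L i (X t)
                (iteratedDeriv i (fun u => deriv σ u + bra (ξ u) (σ u)) t))) = 0) ↔
      ∀ t ∈ Set.Icc t₀ t₁,
        (∑ r ∈ Finset.range (k + 1),
            (-1 : ℝ) ^ r • iteratedDeriv r (fun u => pdBase L r (X u)) t) = 0 ∧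
          ∀ η : 𝔤, deriv π t η = π t (bra (ξ t) η) := by
  have hXs : ContDiff ℝ ∞ X := by
    subst hX
    exact (contDiff_pi.mpr fun r : Fin (k + 1) => contDiff_iteratedDeriv hm r).prodMk
      (contDiff_pi.mpr fun i : Fin k => contDiff_iteratedDeriv hξ i)
  subst hπ
  exact firstVariation_eq_zero_iff bra.toContinuousBilinearMap hk ht
    (contDiff_pdBase_comp hL hXs) (contDiff_pdFib_comp hL hXs) hξ

/-- **Higher-order Lagrange–Poincaré equations for a trivial principal bundle characterize
critical points.**  The Lie algebra `𝔤` is modeled as a finite-dimensional real normed space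
with a bilinear, skew-symmetric bracket `bra` satisfying the Jacobi identity.  For a smooth
Lagrangian `L` on `(Fin (k+1) → ℝ^n) × (Fin k → 𝔤)` and smooth curves `m`, `ξ` with
`X t = (jet_k m t, Jξ t)`, the vanishing of the first variation for all variations
`(h, σ)` whose derivatives of orders `0,…,k-1` vanish at the endpoints is equivalent to the
higher-order Lagrange–Poincaré equations: the horizontal Euler–Lagrange equation
`∑_{r=0}^{k} (−1)^r D^r[t ↦ ∂ᵐ_r L(X t)] = 0` together with the Euler–Poincaré equation
`π'(t)(η) = π(t)([ξ t, η])` for `π(t) = ∑_{r=1}^{k} (−1)^{r−1} D^{r−1}[t ↦ ∂^ξ_r L(X t)](t)`. -/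
theorem lagrange_poincare_iff_critical {𝔤 : Type*} [NormedAddCommGroup 𝔤] [NormedSpace ℝ 𝔤]
    [FiniteDimensional ℝ 𝔤]
    (bra : 𝔤 →ₗ[ℝ] 𝔤 →ₗ[ℝ] 𝔤)
    (hskew : ∀ x y : 𝔤, bra x y = - bra y x)
    (hjac : ∀ x y z : 𝔤, bra x (bra y z) + bra y (bra z x) + bra z (bra x y) = 0)
    (n k : ℕ) (hn : 1 ≤ n) (hk : 1 ≤ k) (t₀ t₁ : ℝ) (ht : t₀ < t₁)
    (L : (Fin (k + 1) → EuclideanSpace ℝ (Fin n)) × (Fin k → 𝔤) → ℝ)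
    (hL : ContDiff ℝ (⊤ : ℕ∞) L)
    (m : ℝ → EuclideanSpace ℝ (Fin n)) (hm : ContDiff ℝ (⊤ : ℕ∞) m)
    (ξ : ℝ → 𝔤) (hξ : ContDiff ℝ (⊤ : ℕ∞) ξ)
    (X : ℝ → (Fin (k + 1) → EuclideanSpace ℝ (Fin n)) × (Fin k → 𝔤))
    (hX : X = fun t => (jet k m t, rjet k ξ t))
    (π : ℝ → 𝔤 →L[ℝ] ℝ)
    (hπ : π = fun t => ∑ i ∈ Finset.range k,
        (-1 : ℝ) ^ i • iteratedDeriv i (fun u => pdFib L i (X u)) t) :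
    (∀ (h : ℝ → EuclideanSpace ℝ (Fin n)) (σ : ℝ → 𝔤),
        ContDiff ℝ (⊤ : ℕ∞) h → ContDiff ℝ (⊤ : ℕ∞) σ →
        (∀ j < k, iteratedDeriv j h t₀ = 0 ∧ iteratedDeriv j h t₁ = 0) →
        (∀ j < k, iteratedDeriv j σ t₀ = 0 ∧ iteratedDeriv j σ t₁ = 0) →
        (∫ t in t₀..t₁,
          ((∑ r ∈ Finset.range (k + 1), pdBase L r (X t) (iteratedDeriv r h t)) +
            ∑ i ∈ Finset.range k,
              pdFib L i (X t)
                (iteratedDeriv i (fun u => deriv σ u + bra (ξ u) (σ u)) t))) = 0) ↔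
      ∀ t ∈ Set.Icc t₀ t₁,
        (∑ r ∈ Finset.range (k + 1),
            (-1 : ℝ) ^ r • iteratedDeriv r (fun u => pdBase L r (X u)) t) = 0 ∧
          ∀ η : 𝔤, deriv π t η = π t (bra (ξ t) η) :=
  lagrange_poincare_iff_critical_general bra n k hk t₀ t₁ ht L hL m hm ξ hξ X hX π hπ

end
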